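/- arXiv:1905.03953 — 6 statements merged into one kernel-verified Lean document; each statement's English description precedes it below -/
import Mathlib

section
/- Let H be a hypergraph and let r_1, r_2 be positive integers with r_1·r_2 < Δ(H). Then r_2·ms_{r_1}(H) ≤ ms_{r_1·r_2}(H) and r_2·cms_{r_1}(H) ≤ cms_{r_1·r_2}(H). -/
/-- A hypergraph: a finite vertex type, a finite edge (label) type and an incidence
relation; distinct (parallel) edges may be incident with the same vertices. -/
structure OrdHypergraph where
  V : Type
  E : Type
  fintV : Fintype V
  fintE : Fintype E
  inc : E → V → Bool

namespace OrdHypergraph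

/-- The number ε of edges of `H`. -/
def edgeCard (H : OrdHypergraph) : ℕ :=
  letI := H.fintE
  Fintype.card H.E

/-- The degree of a vertex: the number of edges incident with it. -/
def degree (H : OrdHypergraph) (v : H.V) : ℕ :=
  letI := H.fintE
  (Finset.univ.filter (fun e => H.inc e v = true)).card

/-- The maximum degree Δ(H). -/
def maxDegree (H : OrdHypergraph) : ℕ :=
  letI := H.fintV
  Finset.univ.sup H.degree

/-- An ordering (labelling) of `H`, encoded by its ε-periodic enumeration:
`f i` is the edge whose label is `i % ε`; on `[ε]`, `f` is a bijection onto the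
edge set. -/
structure IsOrdering (H : OrdHypergraph) (f : ℕ → H.E) : Prop where
  periodic : ∀ i, f (i + H.edgeCard) = f i
  inj : ∀ i j, i < H.edgeCard → j < H.edgeCard → f i = f j → i = j
  surj : ∀ e : H.E, ∃ i, i < H.edgeCard ∧ f i = e

/-- The degree of `v` in the hypergraph `H(S)` formed (with multiplicity) by the
sequence `S` of `s` (cyclically) consecutive edges with labels `j, …, j+s-1`
taken modulo ε. -/
def windowDeg (H : OrdHypergraph) (f : ℕ → H.E) (j s : ℕ) (v : H.V) : ℕ :=
  ((Finset.range s).filter (fun i => H.inc (f (j + i)) v = true)).card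

/-- Every sequence of `s` consecutive edges of the ordering `f` forms a hypergraph of
maximum degree at most `r`.  A window of `s` consecutive edges starts at a label `j`
with `j + s ≤ (a+1)·ε`, where `a·ε ≤ s < (a+1)·ε` (i.e. `a = s / ε`). -/
def msOK (H : OrdHypergraph) (f : ℕ → H.E) (r s : ℕ) : Prop :=
  ∀ j v, j + s ≤ (s / H.edgeCard + 1) * H.edgeCard → H.windowDeg f j s v ≤ r

/-- Every sequence of `s` cyclically consecutive edges of the ordering `f` forms a
hypergraph of maximum degree at most `r`. -/
def cmsOK (H : OrdHypergraph) (f : ℕ → H.E) (r s : ℕ) : Prop :=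
  ∀ j v, H.windowDeg f j s v ≤ r

/-- ms_r(ℓ): the largest `s` such that every `s` consecutive edges of `ℓ` form a
hypergraph of maximum degree at most `r`. -/
noncomputable def msrOf (H : OrdHypergraph) (f : ℕ → H.E) (r : ℕ) : ℕ :=
  sSup {s | H.msOK f r s}

/-- cms_r(ℓ). -/
noncomputable def cmsrOf (H : OrdHypergraph) (f : ℕ → H.E) (r : ℕ) : ℕ :=
  sSup {s | H.cmsOK f r s}

/-- ms_r(H): the maximum of ms_r(ℓ) over all orderings ℓ of H. -/
noncomputable def msr (H : OrdHypergraph) (r : ℕ) : ℕ :=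
  sSup {s | ∃ f, H.IsOrdering f ∧ H.msOK f r s}

/-- cms_r(H): the maximum of cms_r(ℓ) over all orderings ℓ of H. -/
noncomputable def cmsr (H : OrdHypergraph) (r : ℕ) : ℕ :=
  sSup {s | ∃ f, H.IsOrdering f ∧ H.cmsOK f r s}

end OrdHypergraph

/-!
A window of `n·s` consecutive edges splits into `n` windows of length `s`, so an ordering in
which every `s` consecutive edges have maximum degree at most `r` has every `n·s` consecutive
edges of maximum degree at most `n·r`. For cyclic windows this is all. For linear windows one
also needs `n·s < ε`: otherwise the `ε` edges starting at label `0` would be covered by `n`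
windows of length `s` lying inside `[0, ε)`, and a vertex of degree `Δ(H) > r·n` would lie in at
most `n·r` of them. The same bound `Δ(H) > r·n` keeps the sets whose suprema define
`ms_{r·n}(H)` and `cms_{r·n}(H)` below `ε`.
-/

theorem Nat.mul_sSup_le_sSup {A B : Set ℕ} {n : ℕ} (hB : BddAbove B)
    (h : ∀ s ∈ A, n * s ∈ B) : n * sSup A ≤ sSup B := by
  by_cases hA : A.Nonempty ∧ BddAbove A
  · exact le_csSup hB (h _ (Nat.sSup_mem hA.1 hA.2))
  · obtain hA | hA := not_and_or.mp hA
    · simp [Set.not_nonempty_iff_eq_empty.mp hA]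
    · simp [Nat.sSup_of_not_bddAbove hA]

namespace OrdHypergraph

attribute [local instance] OrdHypergraph.fintV OrdHypergraph.fintE

variable {H : OrdHypergraph} {f : ℕ → H.E} {v : H.V} {r s : ℕ}

theorem edgeCard_pos (e : H.E) : 0 < H.edgeCard :=
  Fintype.card_pos_iff.mpr ⟨e⟩

theorem windowDeg_zero (j : ℕ) (v : H.V) : H.windowDeg f j 0 v = 0 := rfl

theorem windowDeg_add (j s t : ℕ) (v : H.V) :
    H.windowDeg f j (s + t) v = H.windowDeg f j s v + H.windowDeg f (j + s) t v := by
  simp only [windowDeg, Finset.card_filter, Finset.sum_range_add, add_assoc]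

theorem windowDeg_mono (j : ℕ) {s t : ℕ} (hst : s ≤ t) (v : H.V) :
    H.windowDeg f j s v ≤ H.windowDeg f j t v :=
  Finset.card_le_card (Finset.filter_subset_filter _ (Finset.range_subset_range.mpr hst))

theorem windowDeg_le_windowDeg {j j' t t' : ℕ} (hj : j ≤ j') (ht : j' + t' ≤ j + t)
    (v : H.V) :
    H.windowDeg f j' t' v ≤ H.windowDeg f j t v := by
  obtain ⟨d, rfl⟩ := Nat.exists_eq_add_of_le hj
  obtain ⟨e, rfl⟩ := Nat.exists_eq_add_of_le (show d ≤ t by omega)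
  calc H.windowDeg f (j + d) t' v ≤ H.windowDeg f (j + d) e v := windowDeg_mono _ (by omega) v
    _ ≤ H.windowDeg f j (d + e) v := by rw [windowDeg_add]; exact Nat.le_add_left _ _

theorem windowDeg_le_mul {m : ℕ} (hsm : s ≤ m)
    (hw : ∀ j, j + s ≤ m → H.windowDeg f j s v ≤ r) (n : ℕ) {j t : ℕ} (ht : t ≤ n * s)
    (hjt : j + t ≤ m) : H.windowDeg f j t v ≤ n * r := by
  induction n generalizing j t with
  | zero => simp [show t = 0 by simpa using ht, windowDeg_zero]
  | succ n ih =>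
    rcases le_or_gt t s with hts | hst
    · -- a short window sits inside the window of length `s` starting at `min j (m - s)`
      calc H.windowDeg f j t v ≤ H.windowDeg f (min j (m - s)) s v :=
            windowDeg_le_windowDeg (min_le_left _ _) (by omega) v
        _ ≤ r := hw _ (by omega)
        _ ≤ (n + 1) * r := Nat.le_mul_of_pos_left r n.succ_pos
    · obtain ⟨t', rfl⟩ := Nat.exists_eq_add_of_le hst.le
      rw [windowDeg_add, add_one_mul, add_comm (n * r)]
      exact Nat.add_le_add (hw j (by omega)) (ih (by rw [add_one_mul] at ht; omega) (by omega))

namespace IsOrdering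

theorem modEq_of_apply_eq (hf : H.IsOrdering f) {i k : ℕ} (h : f i = f k) :
    i ≡ k [MOD H.edgeCard] := by
  have hε := edgeCard_pos (f 0)
  have hp : Function.Periodic f H.edgeCard := hf.periodic
  rw [← hp.map_mod_nat i, ← hp.map_mod_nat k] at h
  exact hf.inj _ _ (Nat.mod_lt _ hε) (Nat.mod_lt _ hε) h

theorem injOn_range (hf : H.IsOrdering f) (j : ℕ) :
    Set.InjOn (fun i => f (j + i)) (Finset.range H.edgeCard) := by
  intro i hi k hk h
  have hik : i % H.edgeCard = k % H.edgeCard := (hf.modEq_of_apply_eq h).add_left_cancel' j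
  rwa [Nat.mod_eq_of_lt (Finset.mem_range.mp hi), Nat.mod_eq_of_lt (Finset.mem_range.mp hk)]
    at hik

theorem windowDeg_edgeCard (hf : H.IsOrdering f) (j : ℕ) (v : H.V) :
    H.windowDeg f j H.edgeCard v = H.degree v := by
  classical
  have himage : (Finset.range H.edgeCard).image (fun i => f (j + i)) = Finset.univ :=
    Finset.eq_univ_of_card _ <| by
      rw [Finset.card_image_of_injOn (hf.injOn_range j), Finset.card_range]; rfl
  rw [degree, ← himage, Finset.filter_image,
    Finset.card_image_of_injOn ((hf.injOn_range j).mono (Finset.filter_subset _ _)), windowDeg]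

theorem degree_le_windowDeg (hf : H.IsOrdering f) (j : ℕ) {t : ℕ} (ht : H.edgeCard ≤ t)
    (v : H.V) : H.degree v ≤ H.windowDeg f j t v :=
  hf.windowDeg_edgeCard j v ▸ windowDeg_mono j ht v

theorem lt_edgeCard_of_msOK (hf : H.IsOrdering f) (hv : r < H.degree v) (h : H.msOK f r s) :
    s < H.edgeCard := by
  by_contra! hs
  have hlt : s < s / H.edgeCard * H.edgeCard + H.edgeCard :=
    Nat.lt_div_mul_add (edgeCard_pos (f 0))
  have hwindow := h 0 v (by rw [zero_add, add_one_mul]; exact hlt.le)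
  have := hf.degree_le_windowDeg 0 hs v
  omega

end IsOrdering

theorem msOK_iff_of_lt (hs : s < H.edgeCard) :
    H.msOK f r s ↔ ∀ j v, j + s ≤ H.edgeCard → H.windowDeg f j s v ≤ r := by
  simp [msOK, Nat.div_eq_of_lt hs]

theorem cmsOK.msOK (h : H.cmsOK f r s) : H.msOK f r s := fun j v _ => h j v

theorem cmsOK.mul (h : H.cmsOK f r s) (n : ℕ) : H.cmsOK f (r * n) (n * s) := fun j v => by
  rw [mul_comm r n]
  exact windowDeg_le_mul (m := j + n * s + s) (by omega) (fun i _ => h i v) n le_rfl (by omega)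

theorem msOK.mul (hf : H.IsOrdering f) {n : ℕ} (hv : r * n < H.degree v) (h : H.msOK f r s) :
    H.msOK f (r * n) (n * s) := by
  rcases Nat.eq_zero_or_pos n with rfl | hn
  · exact fun j w _ => by simp [windowDeg_zero]
  have hsε : s < H.edgeCard :=
    hf.lt_edgeCard_of_msOK ((Nat.le_mul_of_pos_right r hn).trans_lt hv) h
  rw [msOK_iff_of_lt hsε] at h
  have hcover : ∀ j t w, t ≤ n * s → j + t ≤ H.edgeCard → H.windowDeg f j t w ≤ n * r :=
    fun j t w ht hjt => windowDeg_le_mul hsε.le (h · w) n ht hjt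
  have hnsε : n * s < H.edgeCard := by
    by_contra! hle
    have := (hf.degree_le_windowDeg 0 le_rfl v).trans (hcover 0 _ v hle (zero_add _).le)
    rw [mul_comm] at this
    omega
  rw [msOK_iff_of_lt hnsε, mul_comm r n]
  exact fun j w hj => hcover j _ w le_rfl hj

theorem bddAbove_msOK (hv : r < H.degree v) :
    BddAbove {s | ∃ f, H.IsOrdering f ∧ H.msOK f r s} :=
  ⟨H.edgeCard, fun _ ⟨_, hf, h⟩ => (hf.lt_edgeCard_of_msOK hv h).le⟩

theorem bddAbove_cmsOK (hv : r < H.degree v) :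
    BddAbove {s | ∃ f, H.IsOrdering f ∧ H.cmsOK f r s} :=
  (bddAbove_msOK hv).mono <| by rintro _ ⟨f, hf, h⟩; exact ⟨f, hf, h.msOK⟩

end OrdHypergraph

theorem ms_cms_mul_le_general (H : OrdHypergraph) (r1 r2 : ℕ)
    (h : r1 * r2 < H.maxDegree) :
    r2 * H.msr r1 ≤ H.msr (r1 * r2) ∧ r2 * H.cmsr r1 ≤ H.cmsr (r1 * r2) := by
  obtain ⟨v, -, hv⟩ := Finset.lt_sup_iff.mp h
  exact ⟨Nat.mul_sSup_le_sSup (OrdHypergraph.bddAbove_msOK hv)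
      fun _ ⟨f, hf, hs⟩ => ⟨f, hf, hs.mul hf hv⟩,
    Nat.mul_sSup_le_sSup (OrdHypergraph.bddAbove_cmsOK hv)
      fun _ ⟨f, hf, hs⟩ => ⟨f, hf, hs.mul r2⟩⟩

/-- Lemma: `r₂·ms_{r₁}(H) ≤ ms_{r₁r₂}(H)` and `r₂·cms_{r₁}(H) ≤ cms_{r₁r₂}(H)`. -/
theorem ms_cms_mul_le (H : OrdHypergraph) (r1 r2 : ℕ) (hr1 : 1 ≤ r1) (hr2 : 1 ≤ r2)
    (h : r1 * r2 < H.maxDegree) :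
    r2 * H.msr r1 ≤ H.msr (r1 * r2) ∧ r2 * H.cmsr r1 ≤ H.cmsr (r1 * r2) :=
  ms_cms_mul_le_general H r1 r2 h
end

section
/- Let H be a hypergraph that decomposes into matchings M_0,…,M_{t−1}, each with n edges and with orderings ℓ_0,…,ℓ_{t−1} respectively, and let x ∈ [n] and r < Δ(H). If ms(ℓ_i, ℓ_{i+r}) ≥ n − x for all i ∈ [t−r], then ms_r(H) ≥ rn − x; and if ms(ℓ_i, ℓ_{(i+r) mod t}) ≥ n − x for all i ∈ [t], then cms_r(H) ≥ rn − x. -/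
/-- A hypergraph: a finite vertex type, a finite edge (label) type and an incidence
relation; distinct (parallel) edges may be incident with the same vertices. -/
structure Hypergraph' where
  V : Type
  E : Type
  fintV : Fintype V
  fintE : Fintype E
  inc : E → V → Bool

namespace Hypergraph'

/-- The number ε of edges of `H`. -/
def edgeCard (H : Hypergraph') : ℕ :=
  letI := H.fintE
  Fintype.card H.E

/-- The degree of a vertex: the number of edges incident with it. -/
def degree (H : Hypergraph') (v : H.V) : ℕ :=
  letI := H.fintE
  (Finset.univ.filter (fun e => H.inc e v = true)).card

/-- The maximum degree Δ(H). -/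
def maxDegree (H : Hypergraph') : ℕ :=
  letI := H.fintV
  Finset.univ.sup H.degree

/-- An ordering (labelling) of `H`, encoded by its ε-periodic enumeration:
`f i` is the edge whose label is `i % ε`; on `[ε]`, `f` is a bijection onto the
edge set. -/
structure IsOrdering (H : Hypergraph') (f : ℕ → H.E) : Prop where
  periodic : ∀ i, f (i + H.edgeCard) = f i
  inj : ∀ i j, i < H.edgeCard → j < H.edgeCard → f i = f j → i = j
  surj : ∀ e : H.E, ∃ i, i < H.edgeCard ∧ f i = e

/-- The degree of `v` in the hypergraph `H(S)` formed (with multiplicity) by the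
sequence `S` of `s` (cyclically) consecutive edges with labels `j, …, j+s-1`
taken modulo ε. -/
def windowDeg (H : Hypergraph') (f : ℕ → H.E) (j s : ℕ) (v : H.V) : ℕ :=
  ((Finset.range s).filter (fun i => H.inc (f (j + i)) v = true)).card

/-- Every sequence of `s` consecutive edges of the ordering `f` forms a hypergraph of
maximum degree at most `r`.  A window of `s` consecutive edges starts at a label `j`
with `j + s ≤ (a+1)·ε`, where `a·ε ≤ s < (a+1)·ε` (i.e. `a = s / ε`). -/
def msOK (H : Hypergraph') (f : ℕ → H.E) (r s : ℕ) : Prop :=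
  ∀ j v, j + s ≤ (s / H.edgeCard + 1) * H.edgeCard → H.windowDeg f j s v ≤ r

/-- Every sequence of `s` cyclically consecutive edges of the ordering `f` forms a
hypergraph of maximum degree at most `r`. -/
def cmsOK (H : Hypergraph') (f : ℕ → H.E) (r s : ℕ) : Prop :=
  ∀ j v, H.windowDeg f j s v ≤ r

/-- ms_r(ℓ): the largest `s` such that every `s` consecutive edges of `ℓ` form a
hypergraph of maximum degree at most `r`. -/
noncomputable def msrOf (H : Hypergraph') (f : ℕ → H.E) (r : ℕ) : ℕ :=
  sSup {s | H.msOK f r s}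

/-- cms_r(ℓ). -/
noncomputable def cmsrOf (H : Hypergraph') (f : ℕ → H.E) (r : ℕ) : ℕ :=
  sSup {s | H.cmsOK f r s}

/-- ms_r(H): the maximum of ms_r(ℓ) over all orderings ℓ of H. -/
noncomputable def msr (H : Hypergraph') (r : ℕ) : ℕ :=
  sSup {s | ∃ f, H.IsOrdering f ∧ H.msOK f r s}

/-- cms_r(H): the maximum of cms_r(ℓ) over all orderings ℓ of H. -/
noncomputable def cmsr (H : Hypergraph') (r : ℕ) : ℕ :=
  sSup {s | ∃ f, H.IsOrdering f ∧ H.cmsOK f r s}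

end Hypergraph'

/-- `ms(ℓ, ℓ') ≥ s`, where `f` enumerates the edges of a matching with `n` edges
(in the order of its labelling ℓ) and `g` enumerates the edges of a second,
edge-disjoint matching (in the order of its labelling ℓ'): every `s` consecutive
edges of `ℓ ∨ₛ ℓ'` (the last `s-1` edges of `ℓ` followed by the first `s-1` edges
of `ℓ'`) form a hypergraph of maximum degree at most 1, i.e. a matching. -/
def Hypergraph'.pairOK (H : Hypergraph') (f g : ℕ → H.E) (n s : ℕ) : Prop :=
  ∀ p, p + 1 < s → ∀ v : H.V,
    ((Finset.range (s - 1 - p)).filter (fun q => H.inc (f (n - 1 - q)) v = true)).card +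
    ((Finset.range (p + 1)).filter (fun q => H.inc (g q) v = true)).card ≤ 1

/-!
Concatenate the orderings of the matchings: `M 0, M 1, …, M (t - 1)`, cyclically. A window of
`r n - x` consecutive edges starting at position `c` of block `b` either lies within `r` blocks
(if `c ≤ x`), each a matching, or consists of the last `n - c` edges of block `b`, `r - 1` full
blocks, and the first `c - x` edges of block `b + r`; the two partial blocks are `n - x`
consecutive edges of `ℓ_b ∨ ℓ_{b+r}`, hence a matching. So every window has degree at most
`r`. In the non-cyclic case such a window reaches block `b + r`, so `b + r < t`. Finally, `r < Δ(H)`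
means no window is longer than `ε`, which bounds the suprema defining `ms_r` and `cms_r`.
-/

namespace Hypergraph'

variable {H : Hypergraph'}

section Windows

variable (f : ℕ → H.E)

theorem windowDeg_add (j s₁ s₂ : ℕ) (v : H.V) :
    H.windowDeg f j (s₁ + s₂) v = H.windowDeg f j s₁ v + H.windowDeg f (j + s₁) s₂ v := by
  simp only [windowDeg, Finset.card_filter, Finset.sum_range_add, add_assoc]

theorem windowDeg_le_of_le {j₀ s₀ j s : ℕ} (hj : j₀ ≤ j) (hs : j + s ≤ j₀ + s₀) (v : H.V) :
    H.windowDeg f j s v ≤ H.windowDeg f j₀ s₀ v := by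
  obtain ⟨d, rfl⟩ := Nat.exists_eq_add_of_le hj
  obtain ⟨e, rfl⟩ : ∃ e, s₀ = d + s + e := ⟨s₀ - d - s, by omega⟩
  rw [windowDeg_add, windowDeg_add]
  omega

theorem degree_le_edgeCard (v : H.V) : H.degree v ≤ H.edgeCard :=
  letI := H.fintE
  Finset.card_filter_le _ _

theorem maxDegree_le_edgeCard : H.maxDegree ≤ H.edgeCard :=
  letI := H.fintV
  Finset.sup_le fun v _ => degree_le_edgeCard v

theorem exists_lt_degree {r : ℕ} (hr : r < H.maxDegree) : ∃ v, r < H.degree v :=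
  letI := H.fintV
  let ⟨v, _, hv⟩ := Finset.lt_sup_iff.mp hr
  ⟨v, hv⟩

variable {f}

theorem IsOrdering.degree_eq_windowDeg (hf : H.IsOrdering f) (v : H.V) :
    H.degree v = H.windowDeg f 0 H.edgeCard v := by
  let := H.fintE
  symm
  refine Finset.card_bij (fun i _ => f i) ?_ ?_ ?_
  · intro i hi
    simp only [Finset.mem_filter, Finset.mem_range, zero_add, Finset.mem_univ, true_and] at hi ⊢
    exact hi.2
  · intro i hi j hj hij
    simp only [Finset.mem_filter, Finset.mem_range] at hi hj
    exact hf.inj i j hi.1 hj.1 hij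
  · intro e he
    obtain ⟨i, hi, rfl⟩ := hf.surj e
    exact ⟨i, by simpa [hi] using he, rfl⟩

/-- Windows longer than the whole ordering contain every edge, so they meet a vertex of
maximum degree in more than `r` edges. -/
theorem IsOrdering.le_edgeCard (hf : H.IsOrdering f) {r s : ℕ} (hr : r < H.maxDegree)
    (hs : ∀ v, H.windowDeg f 0 s v ≤ r) : s ≤ H.edgeCard := by
  by_contra! hlt
  obtain ⟨v, hv⟩ := exists_lt_degree hr
  have := windowDeg_le_of_le f le_rfl (by omega : 0 + H.edgeCard ≤ 0 + s) v
  have := hs v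
  rw [← hf.degree_eq_windowDeg] at *
  omega

theorem le_cmsr {r s : ℕ} (hr : r < H.maxDegree) (hf : H.IsOrdering f) (hs : H.cmsOK f r s) :
    s ≤ H.cmsr r :=
  le_csSup ⟨H.edgeCard, fun _ ⟨_, hg, hg'⟩ => hg.le_edgeCard hr fun v => hg' 0 v⟩ ⟨f, hf, hs⟩

theorem le_msr {r s : ℕ} (hr : r < H.maxDegree) (hf : H.IsOrdering f) (hs : H.msOK f r s) :
    s ≤ H.msr r := by
  have hε : 0 < H.edgeCard := (Nat.zero_le r).trans_lt (hr.trans_le maxDegree_le_edgeCard)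
  refine le_csSup ⟨H.edgeCard, fun s' ⟨g, hg, hg'⟩ => hg.le_edgeCard hr fun v => hg' 0 v ?_⟩
    ⟨f, hf, hs⟩
  exact (zero_add s').le.trans (Nat.lt_div_mul_add hε).le |>.trans_eq (by ring)

end Windows

theorem pairOK.windowDeg_add_le {f g : ℕ → H.E} {n s : ℕ} (h : H.pairOK f g n s) {a b : ℕ}
    (ha : 0 < a) (han : a ≤ n) (hb : 0 < b) (hab : a + b = s) (v : H.V) :
    H.windowDeg f (n - a) a v + H.windowDeg g 0 b v ≤ 1 := by
  have key := h (b - 1) (by omega) v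
  rw [show s - 1 - (b - 1) = a by omega, show b - 1 + 1 = b by omega] at key
  convert key using 2
  · simp only [windowDeg, Finset.card_filter]
    rw [← Finset.sum_range_reflect]
    refine Finset.sum_congr rfl fun q hq => ?_
    rw [show n - a + (a - 1 - q) = n - 1 - q by grind]
  · simp only [windowDeg, zero_add]

def IsMatchingUpTo (g : ℕ → H.E) (n : ℕ) : Prop :=
  ∀ v, ((Finset.range n).filter (fun m => H.inc (g m) v = true)).card ≤ 1

def concatEnum (t n : ℕ) (M : ℕ → ℕ → H.E) (k : ℕ) : H.E :=
  M (k / n % t) (k % n)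

variable {t n : ℕ} {M : ℕ → ℕ → H.E}

theorem concatEnum_mul_add (b : ℕ) {c : ℕ} (hc : c < n) :
    concatEnum t n M (n * b + c) = M (b % t) c := by
  have hn : 0 < n := by omega
  simp [concatEnum, Nat.mul_add_div hn, Nat.div_eq_of_lt hc, Nat.mod_eq_of_lt hc]

theorem windowDeg_concatEnum (b : ℕ) {c s : ℕ} (hcs : c + s ≤ n) (v : H.V) :
    H.windowDeg (concatEnum t n M) (n * b + c) s v = H.windowDeg (M (b % t)) c s v := by
  unfold windowDeg
  congr 1
  refine Finset.filter_congr fun i hi => ?_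
  rw [Finset.mem_range] at hi
  rw [add_assoc, concatEnum_mul_add b (by omega)]

theorem edgeCard_eq_mul
    (hdecomp : ∀ e : H.E, ∃! p : ℕ × ℕ, p.1 < t ∧ p.2 < n ∧ M p.1 p.2 = e) :
    H.edgeCard = t * n := by
  let := H.fintE
  rw [← Finset.card_range t, ← Finset.card_range n, ← Finset.card_product]
  symm
  refine Finset.card_bij (fun p _ => M p.1 p.2) (fun _ _ => Finset.mem_univ _) ?_ ?_
  · intro p hp q hq hpq
    simp only [Finset.mem_product, Finset.mem_range] at hp hq
    exact (hdecomp _).unique ⟨hp.1, hp.2, hpq⟩ ⟨hq.1, hq.2, rfl⟩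
  · intro e _
    obtain ⟨p, hp, -⟩ := hdecomp e
    exact ⟨p, by simpa using ⟨hp.1, hp.2.1⟩, hp.2.2⟩

theorem isOrdering_concatEnum
    (hdecomp : ∀ e : H.E, ∃! p : ℕ × ℕ, p.1 < t ∧ p.2 < n ∧ M p.1 p.2 = e) (hn : 0 < n) :
    H.IsOrdering (concatEnum t n M) := by
  have hε := edgeCard_eq_mul hdecomp
  have hdiv : ∀ k < t * n, k / n < t := fun k hk => Nat.div_lt_of_lt_mul (by linarith)
  refine ⟨fun i => ?_, fun i j hi hj hij => ?_, fun e => ?_⟩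
  · simp only [concatEnum, hε, Nat.add_mul_div_right _ _ hn, Nat.add_mod_right,
      Nat.add_mul_mod_self_right]
  · rw [hε] at hi hj
    simp only [concatEnum, Nat.mod_eq_of_lt (hdiv i hi), Nat.mod_eq_of_lt (hdiv j hj)] at hij
    have := (hdecomp _).unique (y₁ := (i / n, i % n)) (y₂ := (j / n, j % n))
      ⟨hdiv i hi, Nat.mod_lt _ hn, hij⟩ ⟨hdiv j hj, Nat.mod_lt _ hn, rfl⟩
    simp only [Prod.mk.injEq] at this
    rw [← Nat.div_add_mod i n, ← Nat.div_add_mod j n, this.1, this.2]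
  · obtain ⟨⟨b, c⟩, ⟨hb, hc, rfl⟩, -⟩ := hdecomp e
    refine ⟨n * b + c, ?_, by rw [concatEnum_mul_add b hc, Nat.mod_eq_of_lt hb]⟩
    rw [hε]
    nlinarith

theorem windowDeg_concatEnum_le_one (hM : ∀ i < t, H.IsMatchingUpTo (M i) n) (ht : 0 < t)
    (b : ℕ) {c s : ℕ} (hcs : c + s ≤ n) (v : H.V) :
    H.windowDeg (concatEnum t n M) (n * b + c) s v ≤ 1 := by
  rw [windowDeg_concatEnum b hcs]
  calc _ ≤ H.windowDeg (M (b % t)) 0 n v := windowDeg_le_of_le _ (Nat.zero_le c) (by omega) v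
    _ ≤ 1 := by simpa [windowDeg] using hM _ (Nat.mod_lt b ht) v

theorem windowDeg_concatEnum_le (hM : ∀ i < t, H.IsMatchingUpTo (M i) n) (ht : 0 < t)
    (k b : ℕ) {c s : ℕ} (hc : c ≤ n) (hcs : c + s ≤ k * n) (v : H.V) :
    H.windowDeg (concatEnum t n M) (n * b + c) s v ≤ k := by
  induction k generalizing b c s with
  | zero =>
    obtain rfl : s = 0 := by rw [zero_mul] at hcs; omega
    simp [windowDeg]
  | succ k ih =>
    by_cases hs : c + s ≤ n
    · exact (windowDeg_concatEnum_le_one hM ht b hs v).trans (by omega)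
    obtain ⟨s', rfl⟩ : ∃ s', s = (n - c) + s' := ⟨s - (n - c), by omega⟩
    rw [windowDeg_add, show n * b + c + (n - c) = n * (b + 1) + 0 by rw [mul_add]; omega]
    have hfirst := windowDeg_concatEnum_le_one hM ht b (c := c) (s := n - c) (by omega) v
    have hrest := ih (b + 1) (c := 0) (s := s') (Nat.zero_le n) (by rw [add_mul] at hcs; omega)
    omega

theorem maxDegree_le_of_concatEnum
    (hdecomp : ∀ e : H.E, ∃! p : ℕ × ℕ, p.1 < t ∧ p.2 < n ∧ M p.1 p.2 = e)
    (hM : ∀ i < t, H.IsMatchingUpTo (M i) n) (hn : 0 < n) (ht : 0 < t) :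
    H.maxDegree ≤ t := by
  let := H.fintV
  refine Finset.sup_le fun v _ => ?_
  rw [(isOrdering_concatEnum hdecomp hn).degree_eq_windowDeg, edgeCard_eq_mul hdecomp,
    ← zero_add 0, ← mul_zero n]
  exact windowDeg_concatEnum_le hM ht t 0 (Nat.zero_le n) (by simp) v

theorem windowDeg_concatEnum_le_of_pairOK (hM : ∀ i < t, H.IsMatchingUpTo (M i) n)
    (ht : 0 < t) {x r b c : ℕ} (hc : c < n)
    (hpair : x < c → H.pairOK (M (b % t)) (M ((b + r) % t)) n (n - x)) (v : H.V) :
    H.windowDeg (concatEnum t n M) (n * b + c) (r * n - x) v ≤ r := by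
  obtain _ | R := r
  · simp [windowDeg]
  have hnR : n ≤ (R + 1) * n := Nat.le_mul_of_pos_left n R.succ_pos
  rcases le_or_gt c x with hcx | hxc
  · exact windowDeg_concatEnum_le hM ht (R + 1) b hc.le (by omega) v
  have hlen : (R + 1) * n - x = (n - c) + (R * n + (c - x)) := by rw [add_mul] at hnR ⊢; omega
  have hmid : n * b + c + (n - c) = n * (b + 1) + 0 := by rw [mul_add]; omega
  have hlast : n * (b + 1) + 0 + R * n = n * (b + (R + 1)) + 0 := by ring
  rw [hlen, windowDeg_add, windowDeg_add, hmid, hlast,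
    windowDeg_concatEnum b (c := c) (s := n - c) (by omega),
    windowDeg_concatEnum _ (c := 0) (s := c - x) (by omega)]
  have hends := (hpair hxc).windowDeg_add_le (a := n - c) (b := c - x)
    (by omega) (by omega) (by omega) (by omega) v
  rw [Nat.sub_sub_self hc.le] at hends
  have hblocks :=
    windowDeg_concatEnum_le hM ht R (b + 1) (c := 0) (s := R * n) (Nat.zero_le n) (by omega) v
  omega

end Hypergraph'

theorem matching_decomposition_both_general (H : Hypergraph') (t n x r : ℕ)
    (M : ℕ → ℕ → H.E)
    (hdecomp : ∀ e : H.E, ∃! p : ℕ × ℕ, p.1 < t ∧ p.2 < n ∧ M p.1 p.2 = e)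
    (hmatch : ∀ i, i < t → ∀ v : H.V,
      ((Finset.range n).filter (fun m => H.inc (M i m) v = true)).card ≤ 1)
    (hr : r < H.maxDegree) :
    ((∀ i, i < t - r → H.pairOK (M i) (M (i + r)) n (n - x)) →
        r * n - x ≤ H.msr r) ∧
    ((∀ i, i < t → H.pairOK (M i) (M ((i + r) % t)) n (n - x)) →
        r * n - x ≤ H.cmsr r) := by
  have hε := Hypergraph'.edgeCard_eq_mul hdecomp
  have htn : 0 < t * n := hε ▸
    (Nat.zero_le r).trans_lt (hr.trans_le Hypergraph'.maxDegree_le_edgeCard)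
  have hn : 0 < n := Nat.pos_of_mul_pos_left htn
  have ht : 0 < t := Nat.pos_of_mul_pos_right htn
  have hrt : r < t := hr.trans_le (Hypergraph'.maxDegree_le_of_concatEnum hdecomp hmatch hn ht)
  have hf := Hypergraph'.isOrdering_concatEnum hdecomp hn
  have hsplit (j : ℕ) : ∃ b c, c < n ∧ j = n * b + c :=
    ⟨j / n, j % n, Nat.mod_lt j hn, (Nat.div_add_mod j n).symm⟩
  refine ⟨fun hpair => H.le_msr hr hf fun j v hj => ?_,
    fun hpair => H.le_cmsr hr hf fun j v => ?_⟩
  · obtain ⟨b, c, hc, rfl⟩ := hsplit j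
    refine Hypergraph'.windowDeg_concatEnum_le_of_pairOK hmatch ht hc (fun hxc => ?_) v
    have hlen : r * n - x < t * n :=
      (Nat.sub_le _ _).trans_lt (Nat.mul_lt_mul_of_pos_right hrt hn)
    rw [hε, Nat.div_eq_of_lt hlen, zero_add, one_mul] at hj
    have hbr : b + r < t := by
      refine Nat.lt_of_mul_lt_mul_left (a := n) ?_
      rw [mul_add, mul_comm n r, mul_comm n t]
      omega
    rw [Nat.mod_eq_of_lt (by omega), Nat.mod_eq_of_lt hbr]
    exact hpair b (by omega)
  · obtain ⟨b, c, hc, rfl⟩ := hsplit j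
    refine Hypergraph'.windowDeg_concatEnum_le_of_pairOK hmatch ht hc (fun _ => ?_) v
    rw [← Nat.mod_add_mod]
    exact hpair (b % t) (Nat.mod_lt b ht)

/-- Proposition: if `H` decomposes into matchings `M 0, …, M (t-1)`, each with `n`
edges (`M i m` is the edge of the `i`-th matching with label `m`), and
`ms(ℓ_i, ℓ_{i+r}) ≥ n - x`, then `ms_r(H) ≥ rn - x` (non-cyclic version), resp.
`cms_r(H) ≥ rn - x` (cyclic version, indices mod `t`). -/
theorem matching_decomposition_both (H : Hypergraph') (t n x r : ℕ)
    (M : ℕ → ℕ → H.E)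
    (hdecomp : ∀ e : H.E, ∃! p : ℕ × ℕ, p.1 < t ∧ p.2 < n ∧ M p.1 p.2 = e)
    (hmatch : ∀ i, i < t → ∀ v : H.V,
      ((Finset.range n).filter (fun m => H.inc (M i m) v = true)).card ≤ 1)
    (hx : x < n) (hr1 : 1 ≤ r) (hr : r < H.maxDegree) :
    ((∀ i, i < t - r → H.pairOK (M i) (M (i + r)) n (n - x)) →
        r * n - x ≤ H.msr r) ∧
    ((∀ i, i < t → H.pairOK (M i) (M ((i + r) % t)) n (n - x)) →
        r * n - x ≤ H.cmsr r) :=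
  matching_decomposition_both_general H t n x r M hdecomp hmatch hr
end

section
/- Let 0 < s < t be integers. Then there exists a bijection τ : [t] → [t] such that for every a ∈ [t−1], if τ(a) ≤ t − s − 1 then τ(a+1) = τ(a) + s. -/
private lemma sum_div_shift (s : ℕ) (hs : 0 < s) (t : ℕ) :
    ∑ i ∈ Finset.range s, (t + i) / s = t := by
  induction t with
  | zero =>
    refine Finset.sum_eq_zero fun i hi => ?_
    simp only [Finset.mem_range] at hi
    simp [Nat.div_eq_of_lt hi]
  | succ t ih =>
    have h1 : ∑ i ∈ Finset.range s, (t + 1 + i) / s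
        = ∑ i ∈ Finset.range s, (t + (i + 1)) / s := by
      refine Finset.sum_congr rfl fun i _ => ?_
      ring_nf
    have h2 := Finset.sum_range_succ' (fun i => (t + i) / s) s
    have h3 := Finset.sum_range_succ (fun i => (t + i) / s) s
    have h4 : (t + s) / s = t / s + 1 := Nat.add_div_right t hs
    simp only [Nat.add_zero] at h2 h3
    rw [h1]
    omega

private def Cfun (s t r : ℕ) : ℕ := ∑ j ∈ Finset.range r, ((t - j - 1) / s + 1)

private lemma Cfun_top (s t : ℕ) (hs : 0 < s) (hst : s ≤ t) : Cfun s t s = t := by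
  have key : ∀ j < s, (t - j - 1) / s + 1 = (t + (s - 1 - j)) / s := by
    intro j hj
    have : t - j - 1 + s = t + (s - 1 - j) := by omega
    rw [← Nat.add_div_right _ hs, this]
  calc Cfun s t s = ∑ j ∈ Finset.range s, (t + (s - 1 - j)) / s := by
        refine Finset.sum_congr rfl fun j hj => ?_
        exact key j (Finset.mem_range.mp hj)
    _ = ∑ j ∈ Finset.range s, (t + j) / s := Finset.sum_range_reflect (fun j => (t + j) / s) s
    _ = t := sum_div_shift s hs t

private lemma Cfun_mono (s t : ℕ) {r r' : ℕ} (h : r ≤ r') : Cfun s t r ≤ Cfun s t r' :=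
  Finset.sum_le_sum_of_subset (Finset.range_subset_range.mpr h)

private lemma Cfun_succ (s t r : ℕ) : Cfun s t (r + 1) = Cfun s t r + ((t - r - 1) / s + 1) :=
  Finset.sum_range_succ _ r

private lemma quot_bound (s t n : ℕ) (hs : 0 < s) (hn : n < t) :
    n / s ≤ (t - n % s - 1) / s := by
  rw [Nat.le_div_iff_mul_le hs, Nat.mul_comm]
  have h := Nat.div_add_mod n s
  have h2 := Nat.mod_lt n hs
  omega

/-- Corollary: for `0 < s < t` there is an ordering `τ` of `[t]` such that
whenever `τ(a) ≤ t - s - 1` one has `τ(a+1) = τ(a) + s`. -/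
theorem exists_noncyclic_ordering (s t : ℕ) (hs : 0 < s) (hst : s < t) :
    ∃ τ : ℕ → ℕ,
      Set.BijOn τ (Set.Iio t) (Set.Iio t) ∧
      ∀ a, a < t - 1 → τ a ≤ t - s - 1 → τ (a + 1) = τ a + s := by
  set σ : ℕ → ℕ := fun n => n / s + Cfun s t (n % s) with hσdef
  have hCtop : Cfun s t s = t := Cfun_top s t hs hst.le
  -- maps to
  have hmaps : Set.MapsTo σ (Set.Iio t) (Set.Iio t) := by
    intro n hn
    simp only [Set.mem_Iio] at hn ⊢
    have h1 : n % s < s := Nat.mod_lt n hs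
    have h2 : σ n < Cfun s t (n % s + 1) := by
      rw [Cfun_succ]
      have := quot_bound s t n hs hn
      simp only [hσdef]
      omega
    have h3 : Cfun s t (n % s + 1) ≤ Cfun s t s := Cfun_mono s t h1
    rw [hCtop] at h3
    omega
  -- strict order between residue classes
  have hcross : ∀ m n : ℕ, m < t → n < t → m % s < n % s → σ m < σ n := by
    intro m n hm hn hmn
    have h1 : σ m < Cfun s t (m % s + 1) := by
      rw [Cfun_succ]
      have := quot_bound s t m hs hm
      simp only [hσdef]
      omega
    have h2 : Cfun s t (m % s + 1) ≤ Cfun s t (n % s) := Cfun_mono s t hmn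
    have h3 : Cfun s t (n % s) ≤ σ n := by simp [hσdef]
    omega
  have hinj : Set.InjOn σ (Set.Iio t) := by
    intro m hm n hn hmn
    simp only [Set.mem_Iio] at hm hn
    have hres : m % s = n % s := by
      rcases lt_trichotomy (m % s) (n % s) with h | h | h
      · exact absurd hmn (hcross m n hm hn h).ne
      · exact h
      · exact absurd hmn.symm (hcross n m hn hm h).ne
    have hquot : m / s = n / s := by
      simp only [hσdef, hres] at hmn
      omega
    have h1 := Nat.div_add_mod m s
    rw [hquot, hres] at h1
    have h2 := Nat.div_add_mod n s
    omega
  have hsurj : Set.SurjOn σ (Set.Iio t) (Set.Iio t) := by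
    intro m hm
    simp only [Set.mem_Iio] at hm
    -- find r < s with Cfun r ≤ m < Cfun (r+1)
    have hfind : ∀ r : ℕ, r ≤ s → m < Cfun s t r →
        ∃ r' < r, Cfun s t r' ≤ m ∧ m < Cfun s t (r' + 1) := by
      intro r
      induction r with
      | zero => intro _ h; simp [Cfun] at h
      | succ r ih =>
        intro hr h
        by_cases hc : m < Cfun s t r
        · obtain ⟨r', hr', h1, h2⟩ := ih (by omega) hc
          exact ⟨r', by omega, h1, h2⟩
        · exact ⟨r, by omega, by omega, h⟩
    obtain ⟨r, hr, h1, h2⟩ := hfind s le_rfl (by rw [hCtop]; exact hm)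
    set k := m - Cfun s t r with hk
    have hkb : k ≤ (t - r - 1) / s := by rw [Cfun_succ] at h2; omega
    refine ⟨r + k * s, ?_, ?_⟩
    · simp only [Set.mem_Iio]
      have : k * s ≤ ((t - r - 1) / s) * s := Nat.mul_le_mul_right s hkb
      have h3 : ((t - r - 1) / s) * s ≤ t - r - 1 := Nat.div_mul_le_self _ s
      omega
    · have hmod : (r + k * s) % s = r := by
        rw [Nat.add_mul_mod_self_right, Nat.mod_eq_of_lt hr]
      have hdiv : (r + k * s) / s = k := by
        rw [Nat.add_mul_div_right r k hs, Nat.div_eq_of_lt hr, Nat.zero_add]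
      simp only [hσdef, hmod, hdiv]
      omega
  have hbij : Set.BijOn σ (Set.Iio t) (Set.Iio t) := ⟨hmaps, hinj, hsurj⟩
  set τ := Function.invFunOn σ (Set.Iio t) with hτ
  have hinv : Set.InvOn τ σ (Set.Iio t) (Set.Iio t) := hbij.invOn_invFunOn
  have hbijτ : Set.BijOn τ (Set.Iio t) (Set.Iio t) := Set.BijOn.symm hinv.symm hbij
  refine ⟨τ, hbijτ, ?_⟩
  intro a ha hτa
  have haIio : a ∈ Set.Iio t := by simp only [Set.mem_Iio]; omega
  have hn : τ a ∈ Set.Iio t := hbijτ.mapsTo haIio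
  set n := τ a with hndef
  have hnlt : n + s < t := by
    simp only [Set.mem_Iio] at hn
    omega
  have hσn : σ n = a := hinv.2 haIio
  have hσns : σ (n + s) = a + 1 := by
    simp only [hσdef] at hσn ⊢
    rw [Nat.add_mod_right, Nat.add_div_right _ hs]
    omega
  have : τ (σ (n + s)) = n + s := hinv.1 (by simp only [Set.mem_Iio]; exact hnlt)
  rw [hσns] at this
  exact this
end

section
/- Let H be a hypergraph that decomposes into matchings M_{i,j} for i ∈ [d] and j ∈ [c], each with n edges and with orderings ℓ_{i,j} respectively, where we set ℓ_{i,c} := ℓ_{i,0}. Suppose, for some x ∈ [n] and r < Δ(H), that gcd(dc, r) = d and ms(ℓ_{i,j}, ℓ_{i,j+1}) ≥ n − x for all i ∈ [d] and j ∈ [c]. Then cms_r(H) ≥ rn − x. -/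
/-- A hypergraph: a finite vertex type, a finite edge (label) type and an incidence
relation; distinct (parallel) edges may be incident with the same vertices. -/
structure MSHypergraph where
  V : Type
  E : Type
  fintV : Fintype V
  fintE : Fintype E
  inc : E → V → Bool

namespace MSHypergraph

/-- The number ε of edges of `H`. -/
def edgeCard (H : MSHypergraph) : ℕ :=
  letI := H.fintE
  Fintype.card H.E

/-- The degree of a vertex: the number of edges incident with it. -/
def degree (H : MSHypergraph) (v : H.V) : ℕ :=
  letI := H.fintE
  (Finset.univ.filter (fun e => H.inc e v = true)).card

/-- The maximum degree Δ(H). -/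
def maxDegree (H : MSHypergraph) : ℕ :=
  letI := H.fintV
  Finset.univ.sup H.degree

/-- An ordering (labelling) of `H`, encoded by its ε-periodic enumeration:
`f i` is the edge whose label is `i % ε`; on `[ε]`, `f` is a bijection onto the
edge set. -/
structure IsOrdering (H : MSHypergraph) (f : ℕ → H.E) : Prop where
  periodic : ∀ i, f (i + H.edgeCard) = f i
  inj : ∀ i j, i < H.edgeCard → j < H.edgeCard → f i = f j → i = j
  surj : ∀ e : H.E, ∃ i, i < H.edgeCard ∧ f i = e

/-- The degree of `v` in the hypergraph `H(S)` formed (with multiplicity) by the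
sequence `S` of `s` (cyclically) consecutive edges with labels `j, …, j+s-1`
taken modulo ε. -/
def windowDeg (H : MSHypergraph) (f : ℕ → H.E) (j s : ℕ) (v : H.V) : ℕ :=
  ((Finset.range s).filter (fun i => H.inc (f (j + i)) v = true)).card

/-- Every sequence of `s` consecutive edges of the ordering `f` forms a hypergraph of
maximum degree at most `r`.  A window of `s` consecutive edges starts at a label `j`
with `j + s ≤ (a+1)·ε`, where `a·ε ≤ s < (a+1)·ε` (i.e. `a = s / ε`). -/
def msOK (H : MSHypergraph) (f : ℕ → H.E) (r s : ℕ) : Prop :=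
  ∀ j v, j + s ≤ (s / H.edgeCard + 1) * H.edgeCard → H.windowDeg f j s v ≤ r

/-- Every sequence of `s` cyclically consecutive edges of the ordering `f` forms a
hypergraph of maximum degree at most `r`. -/
def cmsOK (H : MSHypergraph) (f : ℕ → H.E) (r s : ℕ) : Prop :=
  ∀ j v, H.windowDeg f j s v ≤ r

/-- ms_r(ℓ): the largest `s` such that every `s` consecutive edges of `ℓ` form a
hypergraph of maximum degree at most `r`. -/
noncomputable def msrOf (H : MSHypergraph) (f : ℕ → H.E) (r : ℕ) : ℕ :=
  sSup {s | H.msOK f r s}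

/-- cms_r(ℓ). -/
noncomputable def cmsrOf (H : MSHypergraph) (f : ℕ → H.E) (r : ℕ) : ℕ :=
  sSup {s | H.cmsOK f r s}

/-- ms_r(H): the maximum of ms_r(ℓ) over all orderings ℓ of H. -/
noncomputable def msr (H : MSHypergraph) (r : ℕ) : ℕ :=
  sSup {s | ∃ f, H.IsOrdering f ∧ H.msOK f r s}

/-- cms_r(H): the maximum of cms_r(ℓ) over all orderings ℓ of H. -/
noncomputable def cmsr (H : MSHypergraph) (r : ℕ) : ℕ :=
  sSup {s | ∃ f, H.IsOrdering f ∧ H.cmsOK f r s}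

end MSHypergraph

/-- `ms(ℓ, ℓ') ≥ s`, where `f` enumerates the edges of a matching with `n` edges
(in the order of its labelling ℓ) and `g` enumerates the edges of a second,
edge-disjoint matching (in the order of its labelling ℓ'): every `s` consecutive
edges of `ℓ ∨ₛ ℓ'` (the last `s-1` edges of `ℓ` followed by the first `s-1` edges
of `ℓ'`) form a hypergraph of maximum degree at most 1, i.e. a matching. -/
def MSHypergraph.pairOK (H : MSHypergraph) (f g : ℕ → H.E) (n s : ℕ) : Prop :=
  ∀ p, p + 1 < s → ∀ v : H.V,
    ((Finset.range (s - 1 - p)).filter (fun q => H.inc (f (n - 1 - q)) v = true)).card +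
    ((Finset.range (p + 1)).filter (fun q => H.inc (g q) v = true)).card ≤ 1

/-!
Write `r = d r'`. Concatenate the matchings as blocks of `n` edges, block `t` being
`M_{t mod d, j}` with `j ≡ ⌊t/d⌋ · r'⁻¹ (mod c)`. As `gcd(c, r') = 1` this lists every
matching exactly once in each period of `dc` blocks, and block `t + r` is the successor
`M_{i, j+1}` of block `t = M_{i, j}`. A cyclic window of `rn − x` edges either lies within
`r` consecutive blocks, each a matching, or consists of the last `a` edges of some
`M_{i, j}`, then `r − 1` whole blocks, then the first `b` edges of `M_{i, j+1}` with
`a + b = n − x`; by `ms(ℓ_{i,j}, ℓ_{i,j+1}) ≥ n − x` the two partial blocks together form a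
matching. Either way no vertex has degree more than `r` in the window.
-/

open Finset

def blockConcat {α : Type*} (n : ℕ) (B : ℕ → ℕ → α) (m : ℕ) : α :=
  B (m / n) (m % n)

section BlockConcat

variable {α : Type*} {n : ℕ} {B : ℕ → ℕ → α}

lemma blockConcat_mul_add {q : ℕ} (t : ℕ) (hq : q < n) :
    blockConcat n B (t * n + q) = B t q := by
  have hn : 0 < n := by omega
  simp [blockConcat, Nat.add_mul_div_right, Nat.add_mul_mod_self_right, Nat.div_eq_of_lt hq,
    Nat.mod_eq_of_lt hq, add_comm, hn]

lemma blockConcat_add_mul {k : ℕ} (hB : ∀ t, B (t + k) = B t) (hn : 0 < n) (m : ℕ) :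
    blockConcat n B (m + k * n) = blockConcat n B m := by
  simp [blockConcat, Nat.add_mul_div_right _ _ hn, hB]

end BlockConcat

/-- Block `t` of the ordering is the matching `M i j` with `(i, j) = cyclicSchedule d c u t`.
When `u` inverts `r'` modulo `c`, moving `d r'` blocks ahead keeps `i` and advances `j` by one. -/
def cyclicSchedule (d c u t : ℕ) : ℕ × ℕ :=
  (t % d, t / d * u % c)

section CyclicSchedule

variable {d c u r' : ℕ}

lemma cyclicSchedule_add_mul (hd : 0 < d) (t : ℕ) :
    cyclicSchedule d c u (t + d * c) = cyclicSchedule d c u t := by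
  simp [cyclicSchedule, Nat.add_mul_div_left _ _ hd, add_mul]

lemma cyclicSchedule_add (hd : 0 < d) (hu : r' * u ≡ 1 [MOD c]) (t : ℕ) :
    cyclicSchedule d c u (t + d * r') =
      ((cyclicSchedule d c u t).1, ((cyclicSchedule d c u t).2 + 1) % c) := by
  refine Prod.ext (Nat.add_mul_mod_self_left _ _ _) ?_
  simp only [cyclicSchedule, Nat.add_mul_div_left _ _ hd, Nat.mod_add_mod]
  rw [add_mul]
  exact Nat.ModEq.add_left _ hu

lemma bijOn_cyclicSchedule (hd : 0 < d) (hc : 0 < c) (hu : r' * u ≡ 1 [MOD c]) :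
    Set.BijOn (cyclicSchedule d c u) (Set.Iio (d * c)) (Set.Iio d ×ˢ Set.Iio c) := by
  have cancel : ∀ k, k * u * r' ≡ k [MOD c] := fun k => by
    simpa [mul_assoc, mul_comm u] using (Nat.ModEq.refl k).mul hu
  refine ⟨fun t _ => ⟨Nat.mod_lt _ hd, Nat.mod_lt _ hc⟩, ?_, ?_⟩
  · intro t ht t' ht' h
    simp only [cyclicSchedule, Prod.mk.injEq, Set.mem_Iio] at h ht ht'
    have hdiv : t / d = t' / d := by
      refine Nat.ModEq.eq_of_lt_of_lt ?_ (Nat.div_lt_of_lt_mul ht) (Nat.div_lt_of_lt_mul ht')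
      exact (cancel _).symm.trans ((Nat.ModEq.mul_right r' h.2).trans (cancel _))
    rw [← Nat.div_add_mod t d, ← Nat.div_add_mod t' d, hdiv, h.1]
  · rintro ⟨i, j⟩ ⟨hi, hj⟩
    simp only [Set.mem_Iio] at hi hj
    refine ⟨i + d * (j * r' % c), ?_, ?_⟩
    · have : j * r' % c + 1 ≤ c := Nat.mod_lt _ hc
      simp only [Set.mem_Iio]
      nlinarith
    · have hj' := cancel j
      rw [mul_right_comm, Nat.ModEq, Nat.mod_eq_of_lt hj] at hj'
      simpa [cyclicSchedule, Nat.add_mul_div_left _ _ hd, Nat.div_eq_of_lt hi,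
        Nat.mod_eq_of_lt hi] using hj'

end CyclicSchedule

namespace MSHypergraph

variable {H : MSHypergraph}

section Windows

variable (f : ℕ → H.E) (v : H.V)

lemma windowDeg_add (j s s' : ℕ) :
    H.windowDeg f j (s + s') v = H.windowDeg f j s v + H.windowDeg f (j + s) s' v := by
  simp only [windowDeg, card_filter, sum_range_add, add_assoc]

lemma windowDeg_mono {j s j' s' : ℕ} (hj : j' ≤ j) (hs : j + s ≤ j' + s') :
    H.windowDeg f j s v ≤ H.windowDeg f j' s' v := by
  obtain ⟨a, rfl⟩ := Nat.exists_eq_add_of_le hj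
  obtain ⟨b, rfl⟩ : ∃ b, s' = a + s + b := ⟨s' - (a + s), by omega⟩
  rw [windowDeg_add, windowDeg_add]
  omega

lemma windowDeg_sub_eq_card_filter_reflect {n a : ℕ} (ha : a ≤ n) :
    H.windowDeg f (n - a) a v =
      ((range a).filter fun q => H.inc (f (n - 1 - q)) v = true).card := by
  rw [windowDeg, card_filter, card_filter, ← sum_range_reflect]
  refine sum_congr rfl fun q hq => ?_
  rw [show n - a + (a - 1 - q) = n - 1 - q by simp at hq; omega]

end Windows

lemma pairOK.windowDeg_add_le {f g : ℕ → H.E} {n s : ℕ} (h : H.pairOK f g n s) (hs : s ≤ n)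
    {a b : ℕ} (ha : 0 < a) (hb : 0 < b) (hab : a + b = s) (v : H.V) :
    H.windowDeg f (n - a) a v + H.windowDeg g 0 b v ≤ 1 := by
  have key := h (b - 1) (by omega) v
  rw [show s - 1 - (b - 1) = a by omega, Nat.sub_add_cancel hb] at key
  rw [windowDeg_sub_eq_card_filter_reflect f v (by omega)]
  simpa [windowDeg] using key

section BlockWindows

variable {n : ℕ} {B : ℕ → ℕ → H.E}

lemma windowDeg_blockConcat {q s : ℕ} (t : ℕ) (hqs : q + s ≤ n) (v : H.V) :
    H.windowDeg (blockConcat n B) (t * n + q) s v = H.windowDeg (B t) q s v := by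
  unfold windowDeg
  congr 1
  refine filter_congr fun i hi => ?_
  rw [add_assoc, blockConcat_mul_add t (by simp at hi; omega)]

lemma windowDeg_blockConcat_le {v : H.V} (hB : ∀ t, H.windowDeg (B t) 0 n v ≤ 1) (t k : ℕ) :
    H.windowDeg (blockConcat n B) (t * n) (k * n) v ≤ k := by
  induction k generalizing t with
  | zero => simp [windowDeg]
  | succ k ih =>
    have hfirst := windowDeg_blockConcat (B := B) (n := n) (q := 0) (s := n) t (by omega) v
    rw [add_zero] at hfirst
    rw [show (k + 1) * n = n + k * n by ring, windowDeg_add, hfirst,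
      show t * n + n = (t + 1) * n by ring]
    have := ih (t + 1)
    have := hB t
    omega

lemma windowDeg_blockConcat_le_of_le {v : H.V} (hB : ∀ t, H.windowDeg (B t) 0 n v ≤ 1)
    {j s t k : ℕ} (hj : t * n ≤ j) (hs : j + s ≤ (t + k) * n) :
    H.windowDeg (blockConcat n B) j s v ≤ k :=
  (windowDeg_mono _ v hj (by rwa [add_mul] at hs)).trans (windowDeg_blockConcat_le hB t k)

lemma cmsOK_blockConcat {r x : ℕ} (hn : 0 < n) (hr : 0 < r)
    (hB : ∀ t v, H.windowDeg (B t) 0 n v ≤ 1)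
    (hBr : ∀ t v a b, 0 < a → 0 < b → a + b = n - x →
      H.windowDeg (B t) (n - a) a v + H.windowDeg (B (t + r)) 0 b v ≤ 1) :
    H.cmsOK (blockConcat n B) r (r * n - x) := by
  intro j v
  obtain ⟨t, q, hq, rfl⟩ : ∃ t q, q < n ∧ j = t * n + q :=
    ⟨j / n, j % n, Nat.mod_lt _ hn, by rw [mul_comm]; exact (Nat.div_add_mod j n).symm⟩
  have hsucc : (t + 1) * n = t * n + n := by ring
  have hshift : (t + r) * n = t * n + r * n := by ring
  have hrn : r * n = (r - 1) * n + n := by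
    rw [Nat.sub_one_mul]; have := Nat.le_mul_of_pos_left n hr; omega
  rcases le_or_gt q x with hqx | hxq
  · exact windowDeg_blockConcat_le_of_le (t := t) (k := r) (hB · v) (by omega) (by omega)
  · have htail := windowDeg_blockConcat (B := B) (n := n) (q := q) (s := n - q) t (by omega) v
    have hhead := windowDeg_blockConcat (B := B) (n := n) (q := 0) (s := q - x) (t + r) (by omega) v
    rw [add_zero] at hhead
    rw [show r * n - x = (n - q) + ((r - 1) * n + (q - x)) by omega, windowDeg_add, windowDeg_add,
      show t * n + q + (n - q) = (t + 1) * n by omega,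
      show (t + 1) * n + (r - 1) * n = (t + r) * n by omega, htail, hhead]
    have hends := hBr t v (n - q) (q - x) (by omega) (by omega) (by omega)
    rw [Nat.sub_sub_self hq.le] at hends
    have hmid := windowDeg_blockConcat_le (hB · v) (t + 1) (r - 1)
    omega

end BlockWindows

lemma isOrdering_of_bijOn {f : ℕ → H.E} {N : ℕ} (hper : ∀ i, f (i + N) = f i)
    (hf : Set.BijOn f (Set.Iio N) Set.univ) : H.IsOrdering f := by
  have hN : H.edgeCard = N := by
    let _ : Fintype H.E := H.fintE
    rw [edgeCard, ← Nat.card_eq_fintype_card, ← Nat.card_univ, ← Nat.card_congr hf.equiv]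
    simp
  refine ⟨hN ▸ hper, fun i j hi hj h => hf.injOn (hN ▸ hi) (hN ▸ hj) h, fun e => ?_⟩
  obtain ⟨i, hi, rfl⟩ := hf.surjOn (Set.mem_univ e)
  exact ⟨i, hN ▸ hi, rfl⟩

lemma bijOn_blockConcat {d c n : ℕ} {M : ℕ → ℕ → ℕ → H.E} {σ : ℕ → ℕ × ℕ}
    (hdecomp : ∀ e : H.E, ∃! p : ℕ × ℕ × ℕ,
      p.1 < d ∧ p.2.1 < c ∧ p.2.2 < n ∧ M p.1 p.2.1 p.2.2 = e)
    (hσ : Set.BijOn σ (Set.Iio (d * c)) (Set.Iio d ×ˢ Set.Iio c)) (hn : 0 < n) :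
    Set.BijOn (blockConcat n fun t => M (σ t).1 (σ t).2) (Set.Iio (d * c * n)) Set.univ := by
  refine ⟨Set.mapsTo_univ _ _, ?_, ?_⟩
  · intro m hm m' hm' h
    simp only [Set.mem_Iio] at hm hm'
    have ht := (Nat.div_lt_iff_lt_mul hn).2 hm
    have ht' := (Nat.div_lt_iff_lt_mul hn).2 hm'
    have hσm := hσ.mapsTo (Set.mem_Iio.mpr ht)
    have hσm' := hσ.mapsTo (Set.mem_Iio.mpr ht')
    simp only [Set.mem_prod, Set.mem_Iio] at hσm hσm'
    have hsame := (hdecomp _).unique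
      (y₁ := ((σ (m / n)).1, (σ (m / n)).2, m % n))
      (y₂ := ((σ (m' / n)).1, (σ (m' / n)).2, m' % n))
      ⟨hσm.1, hσm.2, Nat.mod_lt _ hn, rfl⟩ ⟨hσm'.1, hσm'.2, Nat.mod_lt _ hn, h.symm⟩
    simp only [Prod.mk.injEq] at hsame
    have hdiv : m / n = m' / n := hσ.injOn ht ht' (Prod.ext hsame.1 hsame.2.1)
    rw [← Nat.div_add_mod m n, ← Nat.div_add_mod m' n, hdiv, hsame.2.2]
  · intro e _
    obtain ⟨⟨i, j, q⟩, ⟨hi, hj, hq, rfl⟩, -⟩ := hdecomp e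
    obtain ⟨t, ht, hσt⟩ := hσ.surjOn (show (i, j) ∈ Set.Iio d ×ˢ Set.Iio c from ⟨hi, hj⟩)
    refine ⟨t * n + q, ?_, by simp [blockConcat_mul_add t hq, hσt]⟩
    have : t + 1 ≤ d * c := ht
    simp only [Set.mem_Iio]
    nlinarith

lemma IsOrdering.windowDeg_edgeCard {f : ℕ → H.E} (hf : H.IsOrdering f) (v : H.V) :
    H.windowDeg f 0 H.edgeCard v = H.degree v := by
  let _ : Fintype H.E := H.fintE
  refine card_nbij f (fun i hi => ?_) (fun i hi j hj h => ?_) (fun e he => ?_)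
  · simp_all
  · simp only [coe_filter, mem_range, Set.mem_ofPred_eq] at hi hj
    exact hf.inj i j hi.1 hj.1 h
  · obtain ⟨i, hi, rfl⟩ := hf.surj e
    refine ⟨i, ?_, rfl⟩
    simp_all

lemma nonempty_of_lt_maxDegree {r : ℕ} (hr : r < H.maxDegree) : Nonempty H.E := by
  let _ : Fintype H.V := H.fintV
  obtain ⟨v, -, hv⟩ := Finset.lt_sup_iff.mp hr
  obtain ⟨e, -⟩ := Finset.card_pos.mp (show 0 < H.degree v by omega)
  exact ⟨e⟩

lemma le_cmsr {f : ℕ → H.E} {r s : ℕ} (hf : H.IsOrdering f) (hs : H.cmsOK f r s)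
    (hr : r < H.maxDegree) : s ≤ H.cmsr r := by
  refine le_csSup ⟨H.edgeCard, ?_⟩ ⟨f, hf, hs⟩
  rintro s' ⟨g, hg, hs'⟩
  by_contra! hlt
  have : H.maxDegree ≤ r := by
    let _ : Fintype H.V := H.fintV
    refine Finset.sup_le fun v _ => ?_
    rw [← hg.windowDeg_edgeCard]
    exact (windowDeg_mono g v le_rfl (by omega)).trans (hs' 0 v)
  omega

end MSHypergraph

open MSHypergraph in
theorem matching_decomposition_cyclic_general (H : MSHypergraph) (d c n x r : ℕ)
    (M : ℕ → ℕ → ℕ → H.E)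
    (hdecomp : ∀ e : H.E, ∃! p : ℕ × ℕ × ℕ,
      p.1 < d ∧ p.2.1 < c ∧ p.2.2 < n ∧ M p.1 p.2.1 p.2.2 = e)
    (hmatch : ∀ i j, i < d → j < c → ∀ v : H.V,
      ((Finset.range n).filter (fun m => H.inc (M i j m) v = true)).card ≤ 1)
    (hr : r < H.maxDegree)
    (hgcd : Nat.gcd (d * c) r = d)
    (hpair : ∀ i j, i < d → j < c →
      H.pairOK (M i j) (M i ((j + 1) % c)) n (n - x)) :
    r * n - x ≤ H.cmsr r := by
  obtain ⟨e₀⟩ := nonempty_of_lt_maxDegree hr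
  obtain ⟨⟨i₀, j₀, q₀⟩, ⟨hd, hc, hn, -⟩, -⟩ := hdecomp e₀
  replace hd : 0 < d := by omega
  replace hc : 0 < c := by omega
  replace hn : 0 < n := by omega
  rcases Nat.eq_zero_or_pos r with rfl | hr0
  · simp
  obtain ⟨r', rfl⟩ : d ∣ r := hgcd ▸ Nat.gcd_dvd_right _ _
  have hcop : Nat.Coprime r' c := by
    rw [Nat.gcd_mul_left] at hgcd
    exact Nat.Coprime.symm (Nat.eq_of_mul_eq_mul_left hd (hgcd.trans (mul_one d).symm))
  obtain ⟨u, -, hu⟩ := Nat.exists_mul_mod_eq_of_coprime 1 hcop hc.ne'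
  have hσ := bijOn_cyclicSchedule hd hc hu
  refine le_cmsr (isOrdering_of_bijOn ?_ (bijOn_blockConcat hdecomp hσ hn))
    (cmsOK_blockConcat hn hr0 (fun t v => ?_) (fun t v a b ha hb hab => ?_)) hr
  · exact blockConcat_add_mul (fun t => by rw [cyclicSchedule_add_mul hd]) hn
  · simpa [windowDeg, cyclicSchedule] using hmatch _ _ (Nat.mod_lt t hd) (Nat.mod_lt _ hc) v
  · rw [cyclicSchedule_add hd hu]
    exact (hpair _ _ (Nat.mod_lt t hd) (Nat.mod_lt _ hc)).windowDeg_add_le (by omega) ha hb hab v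

/-- Proposition: if `H` decomposes into matchings `M i j` (`i ∈ [d]`, `j ∈ [c]`),
each with `n` edges, `gcd(dc, r) = d`, and `ms(ℓ_{i,j}, ℓ_{i,j+1}) ≥ n - x`
(with `ℓ_{i,c} := ℓ_{i,0}`), then `cms_r(H) ≥ rn - x`. -/
theorem matching_decomposition_cyclic (H : MSHypergraph) (d c n x r : ℕ)
    (M : ℕ → ℕ → ℕ → H.E)
    (hdecomp : ∀ e : H.E, ∃! p : ℕ × ℕ × ℕ,
      p.1 < d ∧ p.2.1 < c ∧ p.2.2 < n ∧ M p.1 p.2.1 p.2.2 = e)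
    (hmatch : ∀ i j, i < d → j < c → ∀ v : H.V,
      ((Finset.range n).filter (fun m => H.inc (M i j m) v = true)).card ≤ 1)
    (hx : x < n) (hr1 : 1 ≤ r) (hr : r < H.maxDegree)
    (hgcd : Nat.gcd (d * c) r = d)
    (hpair : ∀ i j, i < d → j < c →
      H.pairOK (M i j) (M i ((j + 1) % c)) n (n - x)) :
    r * n - x ≤ H.cmsr r :=
  matching_decomposition_cyclic_general H d c n x r M hdecomp hmatch hr hgcd hpair
end

section
/- For every hypergraph H and all integers r ≥ 1 and λ ≥ 1, cms_r(λH) ≥ cms_r(H). -/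
/-- A hypergraph: a finite vertex type, a finite edge (label) type and an incidence
relation; distinct (parallel) edges may be incident with the same vertices. -/
structure CmsHypergraph where
  V : Type
  E : Type
  fintV : Fintype V
  fintE : Fintype E
  inc : E → V → Bool

namespace CmsHypergraph

/-- The number ε of edges of `H`. -/
def edgeCard (H : CmsHypergraph) : ℕ :=
  letI := H.fintE
  Fintype.card H.E

/-- The degree of a vertex: the number of edges incident with it. -/
def degree (H : CmsHypergraph) (v : H.V) : ℕ :=
  letI := H.fintE
  (Finset.univ.filter (fun e => H.inc e v = true)).card

/-- The maximum degree Δ(H). -/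
def maxDegree (H : CmsHypergraph) : ℕ :=
  letI := H.fintV
  Finset.univ.sup H.degree

/-- An ordering (labelling) of `H`, encoded by its ε-periodic enumeration:
`f i` is the edge whose label is `i % ε`; on `[ε]`, `f` is a bijection onto the
edge set. -/
structure IsOrdering (H : CmsHypergraph) (f : ℕ → H.E) : Prop where
  periodic : ∀ i, f (i + H.edgeCard) = f i
  inj : ∀ i j, i < H.edgeCard → j < H.edgeCard → f i = f j → i = j
  surj : ∀ e : H.E, ∃ i, i < H.edgeCard ∧ f i = e

/-- The degree of `v` in the hypergraph `H(S)` formed (with multiplicity) by the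
sequence `S` of `s` (cyclically) consecutive edges with labels `j, …, j+s-1`
taken modulo ε. -/
def windowDeg (H : CmsHypergraph) (f : ℕ → H.E) (j s : ℕ) (v : H.V) : ℕ :=
  ((Finset.range s).filter (fun i => H.inc (f (j + i)) v = true)).card

/-- Every sequence of `s` consecutive edges of the ordering `f` forms a hypergraph of
maximum degree at most `r`.  A window of `s` consecutive edges starts at a label `j`
with `j + s ≤ (a+1)·ε`, where `a·ε ≤ s < (a+1)·ε` (i.e. `a = s / ε`). -/
def msOK (H : CmsHypergraph) (f : ℕ → H.E) (r s : ℕ) : Prop :=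
  ∀ j v, j + s ≤ (s / H.edgeCard + 1) * H.edgeCard → H.windowDeg f j s v ≤ r

/-- Every sequence of `s` cyclically consecutive edges of the ordering `f` forms a
hypergraph of maximum degree at most `r`. -/
def cmsOK (H : CmsHypergraph) (f : ℕ → H.E) (r s : ℕ) : Prop :=
  ∀ j v, H.windowDeg f j s v ≤ r

/-- ms_r(ℓ): the largest `s` such that every `s` consecutive edges of `ℓ` form a
hypergraph of maximum degree at most `r`. -/
noncomputable def msrOf (H : CmsHypergraph) (f : ℕ → H.E) (r : ℕ) : ℕ :=
  sSup {s | H.msOK f r s}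

/-- cms_r(ℓ). -/
noncomputable def cmsrOf (H : CmsHypergraph) (f : ℕ → H.E) (r : ℕ) : ℕ :=
  sSup {s | H.cmsOK f r s}

/-- ms_r(H): the maximum of ms_r(ℓ) over all orderings ℓ of H. -/
noncomputable def msr (H : CmsHypergraph) (r : ℕ) : ℕ :=
  sSup {s | ∃ f, H.IsOrdering f ∧ H.msOK f r s}

/-- cms_r(H): the maximum of cms_r(ℓ) over all orderings ℓ of H. -/
noncomputable def cmsr (H : CmsHypergraph) (r : ℕ) : ℕ :=
  sSup {s | ∃ f, H.IsOrdering f ∧ H.cmsOK f r s}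

end CmsHypergraph

/-- λH: the hypergraph obtained from `H` by replacing each edge by `lam` parallel
copies. -/
def CmsHypergraph.scale (lam : ℕ) (H : CmsHypergraph) : CmsHypergraph where
  V := H.V
  E := Fin lam × H.E
  fintV := H.fintV
  fintE := letI := H.fintE; inferInstance
  inc := fun e v => H.inc e.2 v

/-!
Repeating an ordering `e₀, …, e_{ε-1}` of `H` λ times, with the `k`-th repetition using the
`k`-th parallel copies, gives an ordering of `λH` whose windows of consecutive edges are copies
of the windows of the original ordering, so every window length admissible for `H` is admissible
for `λH`. The only other point is the junk value `sSup = 0` of unbounded sets: a window of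
`(r+1)·ε` edges counts each edge `r+1` times, so the admissible lengths are bounded unless no edge
meets any vertex, and in that case `cms_r(H) = 0`.
-/

namespace CmsHypergraph

variable {H : CmsHypergraph} {f : ℕ → H.E}

lemma edgeCard_pos (e : H.E) : 0 < H.edgeCard := by
  let := H.fintE
  exact Fintype.card_pos_iff.2 ⟨e⟩

lemma IsOrdering.apply_add_mul_edgeCard (hf : H.IsOrdering f) (i k : ℕ) :
    f (i + k * H.edgeCard) = f i := by
  simpa using (Function.Periodic.nat_mul (f := f) hf.periodic k) i

lemma IsOrdering.apply_mod_edgeCard (hf : H.IsOrdering f) (i : ℕ) : f (i % H.edgeCard) = f i :=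
  Function.Periodic.map_mod_nat hf.periodic i

lemma windowDeg_add (f : ℕ → H.E) (j s t : ℕ) (v : H.V) :
    H.windowDeg f j (s + t) v = H.windowDeg f j s v + H.windowDeg f (j + s) t v := by
  simp only [windowDeg, Finset.card_filter, Finset.sum_range_add, add_assoc]

lemma windowDeg_mono (f : ℕ → H.E) (j : ℕ) {s t : ℕ} (h : s ≤ t) (v : H.V) :
    H.windowDeg f j s v ≤ H.windowDeg f j t v := by
  obtain ⟨d, rfl⟩ := Nat.exists_eq_add_of_le h
  rw [windowDeg_add]
  exact Nat.le_add_right _ _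

lemma IsOrdering.windowDeg_edgeCard (hf : H.IsOrdering f) (v : H.V) :
    H.windowDeg f 0 H.edgeCard v = H.degree v := by
  let := H.fintE
  refine Finset.card_nbij f (fun i hi => ?_) (fun i hi j hj hij => ?_) (fun e he => ?_)
  · simp_all
  · simp_all [hf.inj i j]
  · obtain ⟨i, hi, rfl⟩ := hf.surj e
    exact ⟨i, by simp_all, rfl⟩

lemma IsOrdering.windowDeg_mul_edgeCard (hf : H.IsOrdering f) (k : ℕ) (v : H.V) :
    H.windowDeg f 0 (k * H.edgeCard) v = k * H.degree v := by
  induction k with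
  | zero => simp [windowDeg]
  | succ k ih =>
    have hshift : H.windowDeg f (k * H.edgeCard) H.edgeCard v = H.windowDeg f 0 H.edgeCard v := by
      simp only [windowDeg, zero_add, add_comm (k * H.edgeCard), hf.apply_add_mul_edgeCard]
    rw [add_mul, one_mul, windowDeg_add, zero_add, hshift, ih, hf.windowDeg_edgeCard, add_mul,
      one_mul]

lemma IsOrdering.lt_of_cmsOK (hf : H.IsOrdering f) {r s : ℕ} (hs : H.cmsOK f r s)
    {e : H.E} {v : H.V} (hev : H.inc e v = true) : s < (r + 1) * H.edgeCard := by
  by_contra! hle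
  have hdeg : 0 < H.degree v := by
    let := H.fintE
    exact Finset.card_pos.2 ⟨e, by simpa using hev⟩
  have := (windowDeg_mono f 0 hle v).trans (hs 0 v)
  rw [hf.windowDeg_mul_edgeCard] at this
  nlinarith

lemma bddAbove_cmsOK {e : H.E} {v : H.V} (hev : H.inc e v = true) (r : ℕ) :
    BddAbove {s | ∃ f, H.IsOrdering f ∧ H.cmsOK f r s} :=
  ⟨(r + 1) * H.edgeCard, fun _ ⟨_, hf, hs⟩ => (hf.lt_of_cmsOK hs hev).le⟩

lemma cmsr_eq_zero_of_inc_eq_false (h : ∀ e v, H.inc e v = false) (r : ℕ) : H.cmsr r = 0 := by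
  have hOK : ∀ f s, H.cmsOK f r s := fun f s j v => by simp [windowDeg, h]
  rcases Set.eq_empty_or_nonempty {s | ∃ f, H.IsOrdering f ∧ H.cmsOK f r s} with
    hS | ⟨_, f, hf, _⟩
  · rw [cmsr, hS, csSup_empty]
    rfl
  · have hunbdd : ¬BddAbove {s | ∃ f, H.IsOrdering f ∧ H.cmsOK f r s} :=
      not_bddAbove_iff.2 fun s => ⟨s + 1, ⟨f, hf, hOK f _⟩, Nat.lt_succ_self s⟩
    rw [cmsr, csSup_of_not_bddAbove hunbdd, csSup_empty]
    rfl

lemma edgeCard_scale (lam : ℕ) (H : CmsHypergraph) :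
    (H.scale lam).edgeCard = lam * H.edgeCard := by
  let := H.fintE
  exact (Fintype.card_prod (Fin lam) H.E).trans (by rw [Fintype.card_fin]; rfl)

def scaleOrdering {lam : ℕ} (hlam : 0 < lam) (f : ℕ → H.E) : ℕ → (H.scale lam).E :=
  fun i => (⟨i / H.edgeCard % lam, Nat.mod_lt _ hlam⟩, f i)

lemma IsOrdering.scaleOrdering {lam : ℕ} (hf : H.IsOrdering f) (hlam : 0 < lam) :
    (H.scale lam).IsOrdering (scaleOrdering hlam f) := by
  have hε := edgeCard_pos (f 0)
  refine ⟨fun i => ?_, fun i j hi hj hij => ?_, fun ⟨c, e⟩ => ?_⟩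
  · rw [edgeCard_scale]
    refine Prod.ext (Fin.ext ?_) (hf.apply_add_mul_edgeCard i lam)
    simp [CmsHypergraph.scaleOrdering, Nat.add_mul_div_right i lam hε]
  · rw [edgeCard_scale] at hi hj
    have hdiv : i / H.edgeCard % lam = j / H.edgeCard % lam := congrArg (·.1.val) hij
    have hfij : f i = f j := congrArg Prod.snd hij
    rw [Nat.mod_eq_of_lt ((Nat.div_lt_iff_lt_mul hε).2 hi),
      Nat.mod_eq_of_lt ((Nat.div_lt_iff_lt_mul hε).2 hj)] at hdiv
    have hmod : i % H.edgeCard = j % H.edgeCard := hf.inj _ _ (Nat.mod_lt _ hε) (Nat.mod_lt _ hε)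
      (by rw [hf.apply_mod_edgeCard, hf.apply_mod_edgeCard, hfij])
    rw [← Nat.div_add_mod i H.edgeCard, ← Nat.div_add_mod j H.edgeCard, hdiv, hmod]
  · obtain ⟨i, hi, rfl⟩ := hf.surj e
    refine ⟨c * H.edgeCard + i, ?_, ?_⟩
    · rw [edgeCard_scale]
      nlinarith [c.isLt]
    · have hdiv : (c * H.edgeCard + i) / H.edgeCard = c := by
        rw [add_comm, Nat.add_mul_div_right _ _ hε, Nat.div_eq_of_lt hi, zero_add]
      refine Prod.ext (Fin.ext ?_) ?_
      · simp only [CmsHypergraph.scaleOrdering, hdiv, Nat.mod_eq_of_lt c.isLt]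
      · simp only [add_comm (c * H.edgeCard)]
        exact hf.apply_add_mul_edgeCard i c

lemma cmsOK_scaleOrdering_iff {lam : ℕ} (hlam : 0 < lam) {r s : ℕ} :
    (H.scale lam).cmsOK (scaleOrdering hlam f) r s ↔ H.cmsOK f r s :=
  Iff.rfl

end CmsHypergraph

theorem cmsr_scale_ge_general (H : CmsHypergraph) (r lam : ℕ) (hlam : 1 ≤ lam) :
    (H.scale lam).cmsr r ≥ H.cmsr r := by
  by_cases hinc : ∃ e v, H.inc e v = true
  · obtain ⟨e, v, hev⟩ := hinc
    have hbdd := CmsHypergraph.bddAbove_cmsOK (H := H.scale lam) (e := (⟨0, hlam⟩, e)) hev r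
    refine csSup_le_csSup' hbdd fun s ⟨f, hf, hs⟩ => ?_
    exact ⟨CmsHypergraph.scaleOrdering hlam f, hf.scaleOrdering hlam,
      (CmsHypergraph.cmsOK_scaleOrdering_iff hlam).2 hs⟩
  · push Not at hinc
    have hzero : H.cmsr r = 0 :=
      CmsHypergraph.cmsr_eq_zero_of_inc_eq_false (by simpa using hinc) r
    omega

/-- Lemma: `cms_r(λH) ≥ cms_r(H)`. -/
theorem cmsr_scale_ge (H : CmsHypergraph) (r lam : ℕ) (hr : 1 ≤ r) (hlam : 1 ≤ lam) :
    (H.scale lam).cmsr r ≥ H.cmsr r :=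
  cmsr_scale_ge_general H r lam hlam
end

section
/- Let r ≥ 1 and let ℓ be an ordering of λK_{n_1,…,n_k}. If ms_r(ℓ) = r·n_1, then for every j ∈ [λN·n_1 − r_2·n_1] and every 1 ≤ i ≤ u, the edges ℓ^{−1}(j) and ℓ^{−1}(r_2·n_1 + j) are incident with the same vertex of N_i. If cms_r(ℓ) = r·n_1, then for every j ∈ [λN·n_1] and every 1 ≤ i ≤ u, the edges ℓ^{−1}(j) and ℓ^{−1}((r_2·n_1 + j) mod λN·n_1) are incident with the same vertex of N_i. -/
/-- The complete multi-k-partite k-graph λ·K_{n 0, …, n (k-1)} with edge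
multiplicity `lam`: the vertex set is the disjoint union of the parts
`N_i = Fin (n i)`, and for each choice of one vertex from each part there are
`lam` parallel edges incident with exactly those `k` vertices. -/
def lamK (k lam : ℕ) (n : Fin k → ℕ) : Hypergraph' where
  V := Σ i : Fin k, Fin (n i)
  E := Fin lam × (∀ i : Fin k, Fin (n i))
  fintV := inferInstance
  fintE := inferInstance
  inc := fun e v => decide (e.2 v.1 = v.2)

/-! A window of `r·n_i` consecutive edges of `λK_{n_1,…,n_k}` meets the part `N_i` exactly
`r·n_i` times, so if no vertex has degree more than `r` in it, every vertex of `N_i` has degree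
exactly `r`. When `n_i = n_1` and the window starting one step later is also admissible, the
degree of the vertex `(f j)_i` is unchanged by the shift, so the edge `f (j + r·n_1)` entering the
window must pick the same vertex of `N_i` as the edge `f j` leaving it. Since
`r·n_1 = r_1·ε + r_2·n_1` with `ε = λN·n_1`, periodicity turns `f (j + r·n_1)` into
`f (r_2·n_1 + j)`. -/

theorem Nat.sSup_mem_of_zero_mem {s : Set ℕ} (h : 0 ∈ s) : sSup s ∈ s := by
  by_cases hs : BddAbove s
  · exact Nat.sSup_mem ⟨0, h⟩ hs
  · rwa [Nat.sSup_of_not_bddAbove hs]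

namespace Hypergraph'

variable (H : Hypergraph') (f : ℕ → H.E)

theorem edgeCard_pos (e : H.E) : 0 < H.edgeCard :=
  letI := H.fintE
  Fintype.card_pos_iff.mpr ⟨e⟩

theorem windowDeg_eq_sum (j s : ℕ) (v : H.V) :
    H.windowDeg f j s v = ∑ m ∈ Finset.range s, if H.inc (f (j + m)) v then 1 else 0 :=
  Finset.card_filter _ _

theorem windowDeg_succ (j s : ℕ) (v : H.V) :
    H.windowDeg f j (s + 1) v = H.windowDeg f j s v + if H.inc (f (j + s)) v then 1 else 0 := by
  simp only [windowDeg_eq_sum, Finset.sum_range_succ]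

theorem windowDeg_succ' (j s : ℕ) (v : H.V) :
    H.windowDeg f j (s + 1) v = H.windowDeg f (j + 1) s v + if H.inc (f j) v then 1 else 0 := by
  simp only [windowDeg_eq_sum, Finset.sum_range_succ', add_zero, add_assoc, add_comm 1]

theorem inc_eq_of_windowDeg_eq {j s : ℕ} {v : H.V}
    (h : H.windowDeg f j s v = H.windowDeg f (j + 1) s v) :
    H.inc (f j) v = H.inc (f (j + s)) v := by
  have := (H.windowDeg_succ f j s v).symm.trans (H.windowDeg_succ' f j s v)
  rw [h, Nat.add_left_cancel_iff] at this
  split_ifs at this <;> simp_all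

theorem msOK_msrOf (r : ℕ) : H.msOK f r (H.msrOf f r) :=
  Nat.sSup_mem_of_zero_mem (s := {s | H.msOK f r s}) fun _ _ _ => by simp [windowDeg]

theorem cmsOK_cmsrOf (r : ℕ) : H.cmsOK f r (H.cmsrOf f r) :=
  Nat.sSup_mem_of_zero_mem (s := {s | H.cmsOK f r s}) fun _ _ => by simp [windowDeg]

variable {H f}

theorem msOK.windowDeg_le {r s a t j : ℕ} (h : H.msOK f r s) (hs : s = a * H.edgeCard + t)
    (ht : t < H.edgeCard) (hj : j + t ≤ H.edgeCard) (v : H.V) : H.windowDeg f j s v ≤ r := by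
  have hdiv : s / H.edgeCard = a := by
    rw [hs, Nat.add_comm, Nat.add_mul_div_right _ _ (by omega), Nat.div_eq_of_lt ht, zero_add]
  refine h j v ?_
  rw [hdiv, add_one_mul, hs]
  omega

theorem IsOrdering.apply_add_mul (hf : H.IsOrdering f) (x m : ℕ) :
    f (x + m * H.edgeCard) = f x := by
  induction m with
  | zero => simp
  | succ m ih => rw [add_mul, one_mul, ← add_assoc, hf.periodic, ih]

theorem IsOrdering.apply_mod (hf : H.IsOrdering f) (x : ℕ) : f (x % H.edgeCard) = f x := by
  conv_rhs => rw [← Nat.mod_add_div' x H.edgeCard]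
  exact (hf.apply_add_mul _ _).symm

end Hypergraph'

namespace lamK

variable {k lam : ℕ} {n : Fin k → ℕ}

theorem edgeCard_eq_mul_prod : (lamK k lam n).edgeCard = lam * ∏ i, n i := by
  show Fintype.card (Fin lam × ((i : Fin k) → Fin (n i))) = _
  simp only [Fintype.card_prod, Fintype.card_fin, Fintype.card_pi]

theorem sum_windowDeg_part (f : ℕ → (lamK k lam n).E) (j s : ℕ) (i : Fin k) :
    ∑ w : Fin (n i), (lamK k lam n).windowDeg f j s ⟨i, w⟩ = s := by
  have hdeg (w : Fin (n i)) : (lamK k lam n).windowDeg f j s ⟨i, w⟩ =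
      ∑ m ∈ Finset.range s, if (f (j + m)).2 i = w then 1 else 0 := by
    refine (Hypergraph'.windowDeg_eq_sum _ f j s _).trans ?_
    exact Finset.sum_congr rfl fun m _ => by simp [lamK]
  simp only [hdeg]
  rw [Finset.sum_comm]
  simp

theorem windowDeg_part_eq {f : ℕ → (lamK k lam n).E} {j r : ℕ} {i : Fin k}
    (h : ∀ w, (lamK k lam n).windowDeg f j (r * n i) ⟨i, w⟩ ≤ r) (w : Fin (n i)) :
    (lamK k lam n).windowDeg f j (r * n i) ⟨i, w⟩ = r := by
  have hsum : ∑ w : Fin (n i), (lamK k lam n).windowDeg f j (r * n i) ⟨i, w⟩ =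
      ∑ _w : Fin (n i), r := by
    simp [sum_windowDeg_part, mul_comm]
  exact (Finset.sum_eq_sum_iff_of_le fun w _ => h w).mp hsum w (Finset.mem_univ w)

theorem apply_eq_apply_add_of_windowDeg_le {f : ℕ → (lamK k lam n).E} {j r : ℕ} {i : Fin k}
    (h₀ : ∀ w, (lamK k lam n).windowDeg f j (r * n i) ⟨i, w⟩ ≤ r)
    (h₁ : ∀ w, (lamK k lam n).windowDeg f (j + 1) (r * n i) ⟨i, w⟩ ≤ r) :
    (f j).2 i = (f (j + r * n i)).2 i := by
  have hinc := (lamK k lam n).inc_eq_of_windowDeg_eq f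
    ((windowDeg_part_eq h₀ ((f j).2 i)).trans (windowDeg_part_eq h₁ _).symm)
  simpa [lamK, eq_comm] using hinc

theorem edgeCard_eq_mul_prod_ne_zero (hk : 0 < k) :
    (lamK k lam n).edgeCard =
      lam * (∏ i ∈ Finset.univ.filter (fun i : Fin k => (i : ℕ) ≠ 0), n i) * n ⟨0, hk⟩ := by
  rw [edgeCard_eq_mul_prod, ← Finset.mul_prod_erase _ n (Finset.mem_univ ⟨0, hk⟩), ← Finset.filter_ne']
  simp only [ne_eq, Fin.ext_iff]
  ring

end lamK

/-- Claim: if `ms_r(ℓ) = r·n_1` (resp. `cms_r(ℓ) = r·n_1`) for an ordering `ℓ` of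
`λK_{n_1,…,n_k}`, then the edges with labels `j` and `r_2·n_1 + j` (resp. taken
mod `λN·n_1`) are incident with the same vertex of `N_i` for each `i = 1, …, u`.
The ordering is encoded by its periodic enumeration `f` (so `f j = ℓ⁻¹(j)`), and
"incident with the same vertex of `N_i`" says the two edges choose the same vertex
in the `i`-th part. -/
theorem claim_same_vertex
    (k lam u : ℕ) (n : Fin k → ℕ)
    (hk : 2 ≤ k)
    (heq : ∀ i : Fin k, (i : ℕ) < u → n i = n ⟨0, by omega⟩)
    (N : ℕ)
    (hN : N = ∏ i ∈ Finset.univ.filter (fun i : Fin k => (i : ℕ) ≠ 0), n i)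
    (r r1 r2 : ℕ)
    (hrdec : r = r1 * (lam * N) + r2) (hr2 : r2 < lam * N)
    (f : ℕ → (lamK k lam n).E) (hf : (lamK k lam n).IsOrdering f) :
    (((lamK k lam n).msrOf f r = r * n ⟨0, by omega⟩) →
      ∀ j, j < lam * N * n ⟨0, by omega⟩ - r2 * n ⟨0, by omega⟩ → ∀ i : Fin k, (i : ℕ) < u →
        (f j).2 i = (f (r2 * n ⟨0, by omega⟩ + j)).2 i) ∧
    (((lamK k lam n).cmsrOf f r = r * n ⟨0, by omega⟩) →
      ∀ j, j < lam * N * n ⟨0, by omega⟩ → ∀ i : Fin k, (i : ℕ) < u →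
        (f j).2 i = (f ((r2 * n ⟨0, by omega⟩ + j) % (lam * N * n ⟨0, by omega⟩))).2 i) := by
  have hε := hN ▸ lamK.edgeCard_eq_mul_prod_ne_zero (lam := lam) (n := n) (by omega)
  generalize n ⟨0, _⟩ = n₀ at heq hε ⊢
  set ε := (lamK k lam n).edgeCard
  have hεpos : 0 < ε := (lamK k lam n).edgeCard_pos (f 0)
  have hrem : r2 * n₀ < ε := by
    rw [hε] at hεpos ⊢
    exact Nat.mul_lt_mul_of_pos_right hr2 (Nat.pos_of_mul_pos_left hεpos)
  have hwindow : r * n₀ = r1 * ε + r2 * n₀ := by rw [hε, hrdec]; ring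
  have hshift (j : ℕ) : f (j + r * n₀) = f (r2 * n₀ + j) := by
    rw [← hf.apply_add_mul (r2 * n₀ + j) r1, hwindow]
    congr 1
    ring
  have hsame (j : ℕ) (h₀ : ∀ v, (lamK k lam n).windowDeg f j (r * n₀) v ≤ r)
      (h₁ : ∀ v, (lamK k lam n).windowDeg f (j + 1) (r * n₀) v ≤ r) (i : Fin k) (hi : (i : ℕ) < u) :
      (f j).2 i = (f (r2 * n₀ + j)).2 i := by
    rw [← hshift, ← heq i hi]
    rw [← heq i hi] at h₀ h₁
    exact lamK.apply_eq_apply_add_of_windowDeg_le (fun _ => h₀ _) (fun _ => h₁ _)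
  constructor
  · intro hms j hj
    have hok := hms ▸ (lamK k lam n).msOK_msrOf f r
    exact hsame j (hok.windowDeg_le hwindow hrem (by omega))
      (hok.windowDeg_le hwindow hrem (by omega))
  · intro hcms j _ i hi
    have hok := hcms ▸ (lamK k lam n).cmsOK_cmsrOf f r
    rw [← hε, hf.apply_mod]
    exact hsame j (hok j) (hok (j + 1)) i hi
end
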